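/- Let R be a commutative ring. The assignments 𝕏 = (X_n)_{n∈ℤ} ↦ {((X_n)_m)_{n∈ℤ} : m a maximal ideal of R} and {(X(m)_n)_{n∈ℤ} : m} ↦ (⋃_m X(m)_n*)_{n∈ℤ} are mutually inverse bijections between Thomason filtrations of Spec(R) and compatible families of Thomason filtrations of the spectra Spec(R_m). In particular, if 𝕏 = (X_n) is a Thomason filtration of Spec(R), then for each maximal ideal m the sequence ((X_n)_m : n ∈ ℤ) is a Thomason filtration of Spec(R_m) and this family is compatible; conversely, for a compatible family of Thomason filtrations {(X(m)_n)_{n∈ℤ} : m}, the sequence (⋃_m X(m)_n* : n ∈ ℤ) is a Thomason filtration of Spec(R) whose localization at each maximal ideal m recovers (X(m)_n)_{n∈ℤ}. -/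

import Mathlib

open PrimeSpectrum
universe u

/-- A subset of `Spec A` is Thomason if it is a union of the zero loci
of a set of finitely generated ideals. -/
def IsThomason {A : Type*} [CommRing A] (X : Set (PrimeSpectrum A)) : Prop :=
  ∃ 𝓘 : Set (Ideal A), (∀ I ∈ 𝓘, I.FG) ∧
    X = ⋃ I ∈ 𝓘, PrimeSpectrum.zeroLocus (I : Set A)

variable {R : Type u} [CommRing R]

/-- The map `Spec (R_m) → Spec R` induced by the localization map. -/
def locMap (m : MaximalSpectrum R) :
    PrimeSpectrum (Localization.AtPrime m.asIdeal) → PrimeSpectrum R :=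
  PrimeSpectrum.comap (algebraMap R (Localization.AtPrime m.asIdeal))

/-- `Y*`: the image of a subset of `Spec (R_m)` in `Spec R`. -/
def star (m : MaximalSpectrum R)
    (Y : Set (PrimeSpectrum (Localization.AtPrime m.asIdeal))) : Set (PrimeSpectrum R) :=
  locMap m '' Y

/-- `p_m`: the prime ideal `p R_m` of `R_m` corresponding to a prime `p ⊆ m` of `R`. -/
def localizedPrime (m : MaximalSpectrum R) (p : PrimeSpectrum R)
    (hp : p.asIdeal ≤ m.asIdeal) : PrimeSpectrum (Localization.AtPrime m.asIdeal) :=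
  ⟨p.asIdeal.map (algebraMap R (Localization.AtPrime m.asIdeal)),
    IsLocalization.isPrime_of_isPrime_disjoint m.asIdeal.primeCompl _ p.asIdeal p.isPrime
      (Set.disjoint_left.mpr fun _ hx hxp => hx (hp hxp))⟩

/-- `Z_m = {p_m : p ∈ Z, p ⊆ m}`, the localization of a subset `Z ⊆ Spec R` at `m`. -/
def setLoc (m : MaximalSpectrum R) (Z : Set (PrimeSpectrum R)) :
    Set (PrimeSpectrum (Localization.AtPrime m.asIdeal)) :=
  {q | ∃ p ∈ Z, ∃ hp : p.asIdeal ≤ m.asIdeal, localizedPrime m p hp = q}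

/-- Condition (†). -/
def Dagger (Xf : ∀ m : MaximalSpectrum R, Set (PrimeSpectrum (Localization.AtPrime m.asIdeal))) :
    Prop :=
  ∀ m m' : MaximalSpectrum R,
    {p ∈ star m (Xf m) | p.asIdeal ≤ m'.asIdeal} =
      {p ∈ star m' (Xf m') | p.asIdeal ≤ m.asIdeal}

/-- A compatible family of Thomason subsets: each `X(m)` is Thomason, the family
satisfies (†), and the union `⋃ X(m)*` is a Thomason subset of `Spec R`. -/
def CompatibleFamily
    (Xf : ∀ m : MaximalSpectrum R, Set (PrimeSpectrum (Localization.AtPrime m.asIdeal))) :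
    Prop :=
  (∀ m, IsThomason (Xf m)) ∧ Dagger Xf ∧ IsThomason (⋃ m, star m (Xf m))


/-- A Thomason filtration: a decreasing `ℤ`-indexed sequence of Thomason subsets. -/
def IsThomasonFiltration {A : Type*} [CommRing A]
    (𝕏 : ℤ → Set (PrimeSpectrum A)) : Prop :=
  (∀ n, IsThomason (𝕏 n)) ∧ ∀ n : ℤ, 𝕏 (n + 1) ⊆ 𝕏 n

/-- A compatible family of Thomason filtrations: for each `n ∈ ℤ` the family
of `n`-th terms is a compatible family of Thomason subsets. -/
def CompatibleFiltrationFamily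
    (Xf : ∀ m : MaximalSpectrum R, ℤ → Set (PrimeSpectrum (Localization.AtPrime m.asIdeal))) :
    Prop :=
  ∀ n : ℤ, CompatibleFamily (fun m => Xf m n)

/-!
The localization map identifies `Spec R_m` with the primes of `R` contained in `m`, so
`Z ↦ Z_m` is the preimage and `Y ↦ Y*` the image under it. Hence `(Z_m)* = {p ∈ Z | p ⊆ m}`,
and since every prime lies in a maximal ideal, `⋃_m (Z_m)* = Z`. Conversely, condition (†)
says that the sets `X(m)*` agree on primes lying under two maximal ideals, which is exactly
what makes `X(m)` the preimage of `⋃_m' X(m')*`. Thomason subsets pull back to Thomason subsets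
along any ring map, because `comap f ⁻¹' V(I) = V(f(I) B)`.
-/

theorem PrimeSpectrum.isThomason_preimage_comap {A B : Type*} [CommRing A] [CommRing B]
    (f : A →+* B) {X : Set (PrimeSpectrum A)} (hX : IsThomason X) :
    IsThomason (comap f ⁻¹' X) := by
  obtain ⟨𝓘, hFG, rfl⟩ := hX
  refine ⟨Ideal.map f '' 𝓘, ?_, ?_⟩
  · rintro _ ⟨I, hI, rfl⟩
    exact (hFG I hI).map f
  · rw [Set.preimage_iUnion₂, Set.biUnion_image]
    refine Set.iUnion₂_congr fun I _ => ?_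
    rw [preimage_comap_zeroLocus, ← zeroLocus_span, ← Ideal.map]

section Localization

variable (m : MaximalSpectrum R)

lemma locMap_injective : Function.Injective (locMap m) :=
  localization_comap_injective _ m.asIdeal.primeCompl

lemma range_locMap : Set.range (locMap m) = {p | p.asIdeal ≤ m.asIdeal} := by
  rw [locMap, localization_comap_range _ m.asIdeal.primeCompl]
  ext p
  simp only [Set.mem_ofPred_eq, Ideal.primeCompl, Submonoid.coe_set_mk, Subsemigroup.coe_set_mk,
    Set.disjoint_compl_left_iff_subset]
  rfl

lemma locMap_le (q : PrimeSpectrum (Localization.AtPrime m.asIdeal)) :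
    (locMap m q).asIdeal ≤ m.asIdeal :=
  (range_locMap m).subset ⟨q, rfl⟩

lemma locMap_localizedPrime (p : PrimeSpectrum R) (hp : p.asIdeal ≤ m.asIdeal) :
    locMap m (localizedPrime m p hp) = p :=
  PrimeSpectrum.ext <| IsLocalization.under_map_of_isPrime_disjoint m.asIdeal.primeCompl _
    p.isPrime (Set.disjoint_left.mpr fun _ hx hxp => hx (hp hxp))

lemma setLoc_eq_preimage (Z : Set (PrimeSpectrum R)) : setLoc m Z = locMap m ⁻¹' Z := by
  ext q
  constructor
  · rintro ⟨p, hpZ, hp, rfl⟩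
    rwa [Set.mem_preimage, locMap_localizedPrime]
  · intro hq
    refine ⟨locMap m q, hq, locMap_le m q, locMap_injective m ?_⟩
    rw [locMap_localizedPrime]

lemma star_setLoc (Z : Set (PrimeSpectrum R)) :
    star m (setLoc m Z) = {p ∈ Z | p.asIdeal ≤ m.asIdeal} := by
  rw [_root_.star, setLoc_eq_preimage, Set.image_preimage_eq_inter_range, range_locMap]
  rfl

lemma isThomason_setLoc {Z : Set (PrimeSpectrum R)} (hZ : IsThomason Z) :
    IsThomason (setLoc m Z) := by
  rw [setLoc_eq_preimage]
  exact isThomason_preimage_comap _ hZ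

lemma setLoc_mono {Z Z' : Set (PrimeSpectrum R)} (h : Z ⊆ Z') : setLoc m Z ⊆ setLoc m Z' := by
  rw [setLoc_eq_preimage, setLoc_eq_preimage]
  exact Set.preimage_mono h

lemma star_mono {Y Y' : Set (PrimeSpectrum (Localization.AtPrime m.asIdeal))} (h : Y ⊆ Y') :
    star m Y ⊆ star m Y' :=
  Set.image_mono h

lemma isThomasonFiltration_setLoc {𝕏 : ℤ → Set (PrimeSpectrum R)} (h𝕏 : IsThomasonFiltration 𝕏) :
    IsThomasonFiltration fun n => setLoc m (𝕏 n) :=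
  ⟨fun n => isThomason_setLoc m (h𝕏.1 n), fun n => setLoc_mono m (h𝕏.2 n)⟩

end Localization

lemma iUnion_star_setLoc (Z : Set (PrimeSpectrum R)) :
    ⋃ m : MaximalSpectrum R, star m (setLoc m Z) = Z := by
  simp only [star_setLoc]
  refine subset_antisymm (Set.iUnion_subset fun m p hp => hp.1) fun p hp => ?_
  obtain ⟨M, hM, hle⟩ := p.asIdeal.exists_le_maximal p.isPrime.ne_top
  exact Set.mem_iUnion.mpr ⟨⟨M, hM⟩, hp, hle⟩

lemma dagger_setLoc (Z : Set (PrimeSpectrum R)) : Dagger fun m => setLoc m Z := by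
  intro m m'
  simp only [star_setLoc, Set.mem_ofPred_eq, and_right_comm]

lemma compatibleFamily_setLoc {Z : Set (PrimeSpectrum R)} (hZ : IsThomason Z) :
    CompatibleFamily fun m => setLoc m Z :=
  ⟨fun m => isThomason_setLoc m hZ, dagger_setLoc Z, (iUnion_star_setLoc Z).symm ▸ hZ⟩

lemma setLoc_iUnion_star
    {Xf : ∀ m : MaximalSpectrum R, Set (PrimeSpectrum (Localization.AtPrime m.asIdeal))}
    (hXf : Dagger Xf) (m : MaximalSpectrum R) :
    setLoc m (⋃ m', star m' (Xf m')) = Xf m := by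
  ext q
  rw [setLoc_eq_preimage, Set.mem_preimage, Set.mem_iUnion]
  constructor
  · rintro ⟨m', hm'⟩
    have hq : locMap m q ∈ {p ∈ star m' (Xf m') | p.asIdeal ≤ m.asIdeal} := ⟨hm', locMap_le m q⟩
    obtain ⟨⟨q', hq', heq⟩, -⟩ := (hXf m m').symm ▸ hq
    rwa [← locMap_injective m heq]
  · exact fun hq => ⟨m, q, hq, rfl⟩

lemma isThomasonFiltration_iUnion_star
    {Xf : ∀ m : MaximalSpectrum R, ℤ → Set (PrimeSpectrum (Localization.AtPrime m.asIdeal))}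
    (hXf : ∀ m, IsThomasonFiltration (Xf m)) (hcomp : CompatibleFiltrationFamily Xf) :
    IsThomasonFiltration fun n => ⋃ m, star m (Xf m n) :=
  ⟨fun n => (hcomp n).2.2, fun n => Set.iUnion_mono fun m => star_mono m ((hXf m).2 n)⟩

/-- Gluing of Thomason filtrations: `𝕏 ↦ {((X_n)_m)_n}` and
`{(X(m)_n)_n} ↦ (⋃_m X(m)_n*)_n` are mutually inverse bijections between Thomason
filtrations of `Spec R` and compatible families of Thomason filtrations over the
localizations at maximal ideals. -/
theorem stmt3 :
    (∀ 𝕏 : ℤ → Set (PrimeSpectrum R), IsThomasonFiltration 𝕏 →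
      (∀ m : MaximalSpectrum R, IsThomasonFiltration (fun n => setLoc m (𝕏 n))) ∧
      CompatibleFiltrationFamily (fun m n => setLoc m (𝕏 n)) ∧
      (∀ n : ℤ, (⋃ m : MaximalSpectrum R, star m (setLoc m (𝕏 n))) = 𝕏 n)) ∧
    (∀ Xf : ∀ m : MaximalSpectrum R, ℤ → Set (PrimeSpectrum (Localization.AtPrime m.asIdeal)),
      (∀ m, IsThomasonFiltration (Xf m)) → CompatibleFiltrationFamily Xf →
      IsThomasonFiltration (fun n => ⋃ m : MaximalSpectrum R, star m (Xf m n)) ∧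
      (∀ (m : MaximalSpectrum R) (n : ℤ),
        setLoc m (⋃ m' : MaximalSpectrum R, star m' (Xf m' n)) = Xf m n)) := by
  refine ⟨fun 𝕏 h𝕏 => ⟨?_, ?_, ?_⟩, fun Xf hXf hcomp => ⟨?_, ?_⟩⟩
  · exact fun m => isThomasonFiltration_setLoc m h𝕏
  · exact fun n => compatibleFamily_setLoc (h𝕏.1 n)
  · exact fun n => iUnion_star_setLoc (𝕏 n)
  · exact isThomasonFiltration_iUnion_star hXf hcomp
  · exact fun m n => setLoc_iUnion_star (hcomp n).2.1 m
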